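/- arXiv:1011.5967 — 2 statements merged into one kernel-verified Lean document; each statement's English description precedes it below -/
import Mathlib

section
/- Let H be a real Hilbert space, A : H → H a continuous self-adjoint linear operator that is coercive, i.e. there exists ν > 0 with ⟨Ax,x⟩ ≥ ν|x|² for all x ∈ H. Let 0 ≤ p ≤ 1, γ ≥ 1, and u₀ ∈ H with ⟨Au₀,u₀⟩ > 0, and let u : [0,∞) → H be a C¹ solution of u'(t) + (1+t)^{p} ⟨Au(t),u(t)⟩^γ A u(t) = 0 with u(0) = u₀. Then there exists a constant γ₄ > 0 (depending only on u₀, A, γ, p) such that for all t ≥ 0: ⟨Au(t),u(t)⟩ ≤ γ₄ (1+t)^{−(p+1)/γ}. -/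
/-!
Along a solution the energy `E t = ⟪A (u t), u t⟫` satisfies
`E' = -2 (1 + t) ^ p E ^ γ ‖A u‖ ^ 2`. Coercivity bounds `‖A u‖ ^ 2` above and below by multiples
of `E`. The upper bound, through an integrating factor, keeps `E` positive for all time; the lower
bound `ν E ≤ ‖A u‖ ^ 2` then gives `(E ^ (-γ))' ≥ 2 γ ν (1 + t) ^ p`, so that `E ^ (-γ)` grows at
least like `(1 + t) ^ (p + 1)`.
-/

open Real
open scoped RealInnerProductSpace

/-- `u` (with derivative `u'`) is a global C¹ solution on `[0,∞)` of the parabolic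
Cauchy problem `u' + (1+t)^{p} ⟨Au,u⟩^γ A u = 0`, `u(0) = u₀`. -/
def IsParSolution {H : Type*} [NormedAddCommGroup H] [InnerProductSpace ℝ H]
    (A : H →L[ℝ] H) (p γ : ℝ) (u₀ : H) (u u' : ℝ → H) : Prop :=
  u 0 = u₀ ∧
  (∀ t ∈ Set.Ici (0:ℝ), HasDerivWithinAt u (u' t) (Set.Ici 0) t) ∧
  ContinuousOn u' (Set.Ici 0) ∧
  (∀ t ∈ Set.Ici (0:ℝ),
    u' t + ((1+t) ^ p * ⟪A (u t), u t⟫ ^ γ) • A (u t) = 0)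

open Set

theorem Convex.monotoneOn_of_hasDerivWithinAt_nonneg {D : Set ℝ} (hD : Convex ℝ D)
    {f f' : ℝ → ℝ} (hf : ∀ x ∈ D, HasDerivWithinAt f (f' x) D x) (hf' : ∀ x ∈ D, 0 ≤ f' x) :
    MonotoneOn f D :=
  _root_.monotoneOn_of_hasDerivWithinAt_nonneg hD (fun x hx => (hf x hx).continuousWithinAt)
    (fun x hx => (hf x (interior_subset hx)).mono interior_subset)
    fun x hx => hf' x (interior_subset hx)

theorem Convex.antitoneOn_of_hasDerivWithinAt_nonpos {D : Set ℝ} (hD : Convex ℝ D)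
    {f f' : ℝ → ℝ} (hf : ∀ x ∈ D, HasDerivWithinAt f (f' x) D x) (hf' : ∀ x ∈ D, f' x ≤ 0) :
    AntitoneOn f D :=
  _root_.antitoneOn_of_hasDerivWithinAt_nonpos hD (fun x hx => (hf x hx).continuousWithinAt)
    (fun x hx => (hf x (interior_subset hx)).mono interior_subset)
    fun x hx => hf' x (interior_subset hx)

/-- Integrating factor: `f * exp G` is monotone. -/
theorem Convex.pos_of_hasDerivWithinAt_of_neg_mul_le {D : Set ℝ} (hD : Convex ℝ D)
    {f f' G k : ℝ → ℝ} (hf : ∀ x ∈ D, HasDerivWithinAt f (f' x) D x)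
    (hG : ∀ x ∈ D, HasDerivWithinAt G (k x) D x) (hfk : ∀ x ∈ D, -(k x * f x) ≤ f' x)
    {a : ℝ} (ha : a ∈ D) (hfa : 0 < f a) {x : ℝ} (hx : x ∈ D) (hax : a ≤ x) : 0 < f x := by
  have hmono : MonotoneOn (fun y => f y * exp (G y)) D :=
    hD.monotoneOn_of_hasDerivWithinAt_nonneg
      (fun y hy => (hf y hy).mul (hG y hy).exp)
      fun y hy => by
        have := hfk y hy
        have := exp_pos (G y)
        nlinarith
  have := hmono ha hx hax
  exact pos_of_mul_pos_left ((mul_pos hfa (exp_pos _)).trans_le this) (exp_pos _).le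

theorem hasDerivAt_one_add_rpow_div {p t : ℝ} (hp : p + 1 ≠ 0) (ht : 0 < 1 + t) :
    HasDerivAt (fun s => (1 + s) ^ (p + 1) / (p + 1)) ((1 + t) ^ p) t := by
  have h := ((hasDerivAt_id t).const_add 1).rpow_const (p := p + 1) (Or.inl ht.ne')
  refine (h.div_const (p + 1)).congr_deriv ?_
  rw [id, add_sub_cancel_right]
  field_simp

theorem min_mul_le_add_mul_sub_one {a b s : ℝ} (hs : 1 ≤ s) : min a b * s ≤ a + b * (s - 1) := by
  nlinarith [min_le_left a b, min_le_right a b]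

theorem le_mul_rpow_of_mul_le_rpow_neg {x m s γ : ℝ} (hx : 0 ≤ x) (hm : 0 < m) (hs : 0 < s)
    (hγ : 0 < γ) (h : m * s ≤ x ^ (-γ)) : x ≤ m ^ (-1 / γ) * s ^ (-1 / γ) := by
  have hexp : -1 / γ ≤ 0 := div_nonpos_of_nonpos_of_nonneg (by norm_num) hγ.le
  calc x = (x ^ (-γ)) ^ (-1 / γ) := by
        rw [← rpow_mul hx, show -γ * (-1 / γ) = 1 by field_simp, rpow_one]
    _ ≤ (m * s) ^ (-1 / γ) := rpow_le_rpow_of_nonpos (mul_pos hm hs) h hexp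
    _ = m ^ (-1 / γ) * s ^ (-1 / γ) := mul_rpow hm.le hs.le

section

variable {H : Type*} [NormedAddCommGroup H] [InnerProductSpace ℝ H] {A : H →L[ℝ] H} {ν : ℝ}

theorem HasDerivWithinAt.inner_apply_self (hA : (A : H →ₗ[ℝ] H).IsSymmetric) {u : ℝ → H}
    {u' : H} {s : Set ℝ} {t : ℝ} (hu : HasDerivWithinAt u u' s t) :
    HasDerivWithinAt (fun τ => ⟪A (u τ), u τ⟫) (2 * ⟪A (u t), u'⟫) s t := by
  refine ((A.hasFDerivAt.comp_hasDerivWithinAt t hu).inner ℝ hu).congr_deriv ?_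
  have hsymm : ⟪A u', u t⟫ = ⟪u', A (u t)⟫ := hA u' (u t)
  rw [two_mul, Function.comp_apply, hsymm, real_inner_comm u']

theorem mul_inner_apply_self_le_norm_apply_sq (hν : 0 ≤ ν)
    (hA : ∀ x : H, ν * ‖x‖ ^ 2 ≤ ⟪A x, x⟫) (x : H) : ν * ⟪A x, x⟫ ≤ ‖A x‖ ^ 2 := by
  have hcs := real_inner_le_norm (A x) x
  have h : ν * ‖x‖ ≤ ‖A x‖ := by
    rcases (norm_nonneg x).eq_or_lt with hx | hx
    · rw [← hx, mul_zero]; exact norm_nonneg _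
    · nlinarith [hA x]
  nlinarith [norm_nonneg (A x), norm_nonneg x]

theorem mul_norm_apply_sq_le_opNorm_sq_mul_inner (hν : 0 ≤ ν)
    (hA : ∀ x : H, ν * ‖x‖ ^ 2 ≤ ⟪A x, x⟫) (x : H) : ν * ‖A x‖ ^ 2 ≤ ‖A‖ ^ 2 * ⟪A x, x⟫ := by
  have h : ‖A x‖ ^ 2 ≤ ‖A‖ ^ 2 * ‖x‖ ^ 2 := by
    rw [← mul_pow]; exact pow_le_pow_left₀ (norm_nonneg _) (A.le_opNorm x) 2
  nlinarith [hA x, sq_nonneg ‖A‖]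

end

namespace IsParSolution

variable {H : Type*} [NormedAddCommGroup H] [InnerProductSpace ℝ H] {A : H →L[ℝ] H}
  {ν p γ : ℝ} {u₀ : H} {u u' : ℝ → H}

theorem hasDerivWithinAt_energy (hA : (A : H →ₗ[ℝ] H).IsSymmetric)
    (hu : IsParSolution A p γ u₀ u u') {t : ℝ} (ht : t ∈ Ici 0) :
    HasDerivWithinAt (fun τ => ⟪A (u τ), u τ⟫)
      (-(2 * (1 + t) ^ p * ⟪A (u t), u t⟫ ^ γ * ‖A (u t)‖ ^ 2)) (Ici 0) t := by
  obtain ⟨-, hderiv, -, hode⟩ := hu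
  refine ((hderiv t ht).inner_apply_self hA).congr_deriv ?_
  rw [eq_neg_of_add_eq_zero_left (hode t ht), inner_neg_right, real_inner_smul_right,
    real_inner_self_eq_norm_sq]
  ring

theorem energy_antitoneOn (hA : (A : H →ₗ[ℝ] H).IsSymmetric) (hA_nonneg : ∀ x, 0 ≤ ⟪A x, x⟫)
    (hu : IsParSolution A p γ u₀ u u') : AntitoneOn (fun t => ⟪A (u t), u t⟫) (Ici 0) :=
  (convex_Ici 0).antitoneOn_of_hasDerivWithinAt_nonpos
    (fun t ht => hu.hasDerivWithinAt_energy hA ht) fun t ht => by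
      have h1t : 0 < 1 + t := by linarith [mem_Ici.mp ht]
      have := rpow_nonneg (hA_nonneg (u t)) γ
      have := rpow_pos_of_pos h1t p
      rw [neg_nonpos]
      positivity

theorem energy_pos (hA : (A : H →ₗ[ℝ] H).IsSymmetric) (hν : 0 < ν)
    (hA_coer : ∀ x : H, ν * ‖x‖ ^ 2 ≤ ⟪A x, x⟫) (hp : -1 < p) (hγ : 0 ≤ γ)
    (hu : IsParSolution A p γ u₀ u u') (h₀ : 0 < ⟪A u₀, u₀⟫) {t : ℝ} (ht : t ∈ Ici 0) :
    0 < ⟪A (u t), u t⟫ := by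
  have hA_nonneg : ∀ x, 0 ≤ ⟪A x, x⟫ := fun x =>
    (by positivity : 0 ≤ ν * ‖x‖ ^ 2).trans (hA_coer x)
  set K := 2 * ‖A‖ ^ 2 * ⟪A u₀, u₀⟫ ^ γ / ν
  have hG : ∀ s ∈ Ici (0 : ℝ), HasDerivWithinAt (fun s => K * ((1 + s) ^ (p + 1) / (p + 1)))
      (K * (1 + s) ^ p) (Ici 0) s := fun s hs =>
    ((hasDerivAt_one_add_rpow_div (by linarith) (by linarith [mem_Ici.mp hs])).const_mul
      K).hasDerivWithinAt
  refine (convex_Ici 0).pos_of_hasDerivWithinAt_of_neg_mul_le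
    (fun s hs => hu.hasDerivWithinAt_energy hA hs) hG (fun s hs => ?_) self_mem_Ici
    (by rwa [hu.1]) ht (mem_Ici.mp ht)
  have h1s : 0 < (1 + s) ^ p := rpow_pos_of_pos (by linarith [mem_Ici.mp hs]) p
  have hEγ : ⟪A (u s), u s⟫ ^ γ ≤ ⟪A u₀, u₀⟫ ^ γ :=
    rpow_le_rpow (hA_nonneg _) (hu.1 ▸ hu.energy_antitoneOn hA hA_nonneg self_mem_Ici hs hs) hγ
  have hAu := mul_norm_apply_sq_le_opNorm_sq_mul_inner hν.le hA_coer (u s)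
  have hbound : 2 * ⟪A (u s), u s⟫ ^ γ * ‖A (u s)‖ ^ 2 ≤ K * ⟪A (u s), u s⟫ := by
    rw [show K * ⟪A (u s), u s⟫ = 2 * (⟪A u₀, u₀⟫ ^ γ * (‖A‖ ^ 2 * ⟪A (u s), u s⟫)) / ν by ring,
      le_div_iff₀ hν]
    nlinarith [mul_le_mul hEγ hAu (by positivity) (rpow_nonneg (hA_nonneg u₀) γ)]
  nlinarith [mul_le_mul_of_nonneg_left hbound h1s.le]

theorem energy_rpow_neg_growth (hA : (A : H →ₗ[ℝ] H).IsSymmetric) (hν : 0 < ν)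
    (hA_coer : ∀ x : H, ν * ‖x‖ ^ 2 ≤ ⟪A x, x⟫) (hp : -1 < p) (hγ : 0 ≤ γ)
    (hu : IsParSolution A p γ u₀ u u') (h₀ : 0 < ⟪A u₀, u₀⟫) {t : ℝ} (ht : t ∈ Ici 0) :
    ⟪A u₀, u₀⟫ ^ (-γ) + 2 * γ * ν / (p + 1) * ((1 + t) ^ (p + 1) - 1) ≤
      ⟪A (u t), u t⟫ ^ (-γ) := by
  have hmono : MonotoneOn
      (fun s => ⟪A (u s), u s⟫ ^ (-γ) - 2 * γ * ν * ((1 + s) ^ (p + 1) / (p + 1))) (Ici 0) := by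
    refine (convex_Ici 0).monotoneOn_of_hasDerivWithinAt_nonneg (fun s hs =>
      ((hu.hasDerivWithinAt_energy hA hs).rpow_const
        (Or.inl (hu.energy_pos hA hν hA_coer hp hγ h₀ hs).ne')).sub
      (((hasDerivAt_one_add_rpow_div (by linarith) (by linarith [mem_Ici.mp hs])).const_mul
        (2 * γ * ν)).hasDerivWithinAt)) fun s hs => ?_
    have hE := hu.energy_pos hA hν hA_coer hp hγ h₀ hs
    have hr : ⟪A (u s), u s⟫ ^ γ * ⟪A (u s), u s⟫ ^ (-γ - 1) = ⟪A (u s), u s⟫⁻¹ := by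
      rw [← rpow_add hE, show γ + (-γ - 1) = -1 by ring, rpow_neg_one]
    have hν' : ν ≤ ‖A (u s)‖ ^ 2 * ⟪A (u s), u s⟫⁻¹ := by
      rw [← div_eq_mul_inv, le_div_iff₀ hE]
      exact mul_inner_apply_self_le_norm_apply_sq hν.le hA_coer (u s)
    have h1s : 0 < (1 + s) ^ p := rpow_pos_of_pos (by linarith [mem_Ici.mp hs]) p
    calc (0 : ℝ) ≤ 2 * γ * (1 + s) ^ p * (‖A (u s)‖ ^ 2 * ⟪A (u s), u s⟫⁻¹ - ν) :=
          mul_nonneg (by positivity) (sub_nonneg.2 hν')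
      _ = _ := by rw [← hr]; ring
  have h := hmono self_mem_Ici ht (mem_Ici.mp ht)
  simp only [add_zero, one_rpow, hu.1] at h
  have hp1 : p + 1 ≠ 0 := by linarith
  calc ⟪A u₀, u₀⟫ ^ (-γ) + 2 * γ * ν / (p + 1) * ((1 + t) ^ (p + 1) - 1)
      = ⟪A u₀, u₀⟫ ^ (-γ) - 2 * γ * ν * (1 / (p + 1))
        + 2 * γ * ν * ((1 + t) ^ (p + 1) / (p + 1)) := by field_simp; ring
    _ ≤ _ := by linarith

end IsParSolution

theorem parabolic_decay_coercive_general
    {H : Type*} [NormedAddCommGroup H] [InnerProductSpace ℝ H]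
    (A : H →L[ℝ] H)
    (hA_sa : ∀ x y : H, ⟪A x, y⟫ = ⟪x, A y⟫)
    (ν : ℝ) (hν : 0 < ν)
    (hA_coer : ∀ x : H, ν * ‖x‖ ^ 2 ≤ ⟪A x, x⟫)
    (p γ : ℝ) (hp0 : 0 ≤ p) (hγ : 1 ≤ γ)
    (u₀ : H) (hmdg : 0 < ⟪A u₀, u₀⟫)
    (u u' : ℝ → H) (hu : IsParSolution A p γ u₀ u u') :
    ∃ γ₄ > 0, ∀ t ∈ Set.Ici (0:ℝ),
      ⟪A (u t), u t⟫ ≤ γ₄ * (1+t) ^ (-(p+1)/γ) := by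
  have hγ0 : 0 < γ := by linarith
  have hp : -1 < p := by linarith
  set m := min (⟪A u₀, u₀⟫ ^ (-γ)) (2 * γ * ν / (p + 1))
  have hm : 0 < m := lt_min (rpow_pos_of_pos hmdg _) (by positivity)
  refine ⟨m ^ (-1 / γ), rpow_pos_of_pos hm _, fun t ht => ?_⟩
  have h1t : 0 < 1 + t := by linarith [mem_Ici.mp ht]
  have hlower : m * (1 + t) ^ (p + 1) ≤ ⟪A (u t), u t⟫ ^ (-γ) :=
    (min_mul_le_add_mul_sub_one (one_le_rpow (by linarith [mem_Ici.mp ht]) (by linarith))).trans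
      (hu.energy_rpow_neg_growth hA_sa hν hA_coer hp hγ0.le hmdg ht)
  calc ⟪A (u t), u t⟫
      ≤ m ^ (-1 / γ) * ((1 + t) ^ (p + 1)) ^ (-1 / γ) :=
        le_mul_rpow_of_mul_le_rpow_neg (hu.energy_pos hA_sa hν hA_coer hp hγ0.le hmdg ht).le hm
          (rpow_pos_of_pos h1t _) hγ0 hlower
    _ = m ^ (-1 / γ) * (1 + t) ^ (-(p + 1) / γ) := by rw [← rpow_mul h1t.le]; ring_nf

/-- Decay estimate (3.5) for coercive operators:
`⟨Au(t),u(t)⟩ ≤ γ₄ (1+t)^{-(p+1)/γ}`. -/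
theorem parabolic_decay_coercive
    {H : Type*} [NormedAddCommGroup H] [InnerProductSpace ℝ H]
    (A : H →L[ℝ] H)
    (hA_sa : ∀ x y : H, ⟪A x, y⟫ = ⟪x, A y⟫)
    (ν : ℝ) (hν : 0 < ν)
    (hA_coer : ∀ x : H, ν * ‖x‖ ^ 2 ≤ ⟪A x, x⟫)
    (p γ : ℝ) (hp0 : 0 ≤ p) (hp1 : p ≤ 1) (hγ : 1 ≤ γ)
    (u₀ : H) (hmdg : 0 < ⟪A u₀, u₀⟫)
    (u u' : ℝ → H) (hu : IsParSolution A p γ u₀ u u') :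
    ∃ γ₄ > 0, ∀ t ∈ Set.Ici (0:ℝ),
      ⟪A (u t), u t⟫ ≤ γ₄ * (1+t) ^ (-(p+1)/γ) :=
  parabolic_decay_coercive_general A hA_sa ν hν hA_coer p γ hp0 hγ u₀ hmdg u u' hu
end

section
/- Let H be a real Hilbert space, A : H → H a continuous self-adjoint nonnegative linear operator, 0 ≤ p ≤ 1, γ ≥ 1, and u₀ ∈ H with ⟨Au₀,u₀⟩ > 0. Let u : [0,∞) → H be a C¹ solution of u'(t) + (1+t)^{p} ⟨Au(t),u(t)⟩^γ A u(t) = 0 with u(0) = u₀. Then there exists a constant γ₅ > 0 (depending only on u₀, A, γ, p) such that the following three integrals are bounded by γ₅: (i) ∫₀^∞ |u'(t)|² (1+t)^{p} dt = ∫₀^∞ ⟨Au(t),u(t)⟩^{2γ} |Au(t)|² (1+t)^{3p} dt; (ii) ∫₀^∞ ⟨Au(t),u(t)⟩^{3γ} ⟨A²u(t), Au(t)⟩ (1+t)^{5p} dt; (iii) ∫₀^∞ [ ⟨Au(t),u(t)⟩^{4γ} (1+t)^{7p} + ⟨Au(t),u(t)⟩^{3γ} (1+t)^{5p} ] |A²u(t)|²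 dt. -/
/-!
Write `a = ⟪Au, u⟫`, `λ = (1+t)^p a^γ` and `qₙ = ⟪Aⁿu, u⟫`. Along the flow `u' = -λ A u`
self-adjointness gives `qₙ' = -2λ qₙ₊₁`. Hence the energies `Eₖ = (1+t)^{2kp} a^{kγ} qₖ` and
the dissipations `Dₖ = (1+t)^{(2k-1)p} a^{kγ} qₖ` satisfy `q₀' = -2 D₁` and
`Eₖ' ≤ 2kp Dₖ - 2 Dₖ₊₁` for `k ≥ 1`: the term coming from `a' ≤ 0` is dropped, and
`(1+t)^{2kp-1} ≤ (1+t)^{(2k-1)p}` because `p ≤ 1`. Integrating over `[0, T]` and using `Eₖ ≥ 0`,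
induction on `k` shows `∫₀^∞ Dₖ < ∞` for all `k ≥ 1`. The three integrals of the theorem are
those of `D₂`, `D₃` and `D₄ + a^{3γ}(1+t)^{5p}‖A²u‖²`, and the last summand is at most `‖A‖ D₃`
by the Cauchy–Schwarz inequality for the semi-inner product `⟪A·, ·⟫`.
-/

open Real MeasureTheory
open scoped RealInnerProductSpace

open Set Filter

def HasBoundedPrimitive (f : ℝ → ℝ) : Prop :=
  ∃ B, ∀ T, 0 ≤ T → ∫ t in (0:ℝ)..T, f t ≤ B

theorem HasBoundedPrimitive.of_hasDerivAt_le {Φ f g : ℝ → ℝ} {C : ℝ} (hC : 0 ≤ C)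
    (hΦ : ContinuousOn Φ (Ici 0)) (hΦ_nonneg : ∀ t, 0 ≤ t → 0 ≤ Φ t)
    (hΦ' : ∀ t, 0 < t → ∃ Φ', HasDerivAt Φ Φ' t ∧ Φ' ≤ C * g t - 2 * f t)
    (hf : ContinuousOn f (Ici 0)) (hg : ContinuousOn g (Ici 0)) (hg_bdd : HasBoundedPrimitive g) :
    HasBoundedPrimitive f := by
  obtain ⟨B, hB⟩ := hg_bdd
  refine ⟨(Φ 0 + C * B) / 2, fun T hT => ?_⟩
  have hIcc : uIcc 0 T ⊆ Ici 0 := by rw [uIcc_of_le hT]; exact Icc_subset_Ici_self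
  have hfi : IntervalIntegrable f volume 0 T := (hf.mono hIcc).intervalIntegrable
  have hgi : IntervalIntegrable g volume 0 T := (hg.mono hIcc).intervalIntegrable
  have hderiv : ∀ t, 0 < t → HasDerivAt Φ (deriv Φ t) t ∧ deriv Φ t ≤ C * g t - 2 * f t := by
    intro t ht
    obtain ⟨Φ', hΦ't, hle⟩ := hΦ' t ht
    exact hΦ't.deriv ▸ ⟨hΦ't, hle⟩
  have hftc : Φ T - Φ 0 ≤ ∫ t in (0:ℝ)..T, (C * g t - 2 * f t) := by
    refine intervalIntegral.sub_le_integral_of_hasDeriv_right_of_le hT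
      (hΦ.mono Icc_subset_Ici_self) (fun t ht => (hderiv t ht.1).1.hasDerivWithinAt)
      ?_ (fun t ht => (hderiv t ht.1).2)
    exact ((continuousOn_const.mul hg).sub (continuousOn_const.mul hf)).mono
      Icc_subset_Ici_self |>.integrableOn_Icc
  rw [intervalIntegral.integral_sub (hgi.const_mul C) (hfi.const_mul 2),
    intervalIntegral.integral_const_mul, intervalIntegral.integral_const_mul] at hftc
  nlinarith [hΦ_nonneg T hT, mul_le_mul_of_nonneg_left (hB T hT) hC]

theorem HasBoundedPrimitive.integrableOn_Ici {f : ℝ → ℝ} (hbdd : HasBoundedPrimitive f)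
    (hf : ContinuousOn f (Ici 0)) (hf_nonneg : ∀ t, 0 ≤ t → 0 ≤ f t) :
    IntegrableOn f (Ici 0) := by
  obtain ⟨B, hB⟩ := hbdd
  rw [integrableOn_Ici_iff_integrableOn_Ioi]
  refine integrableOn_Ioi_of_intervalIntegral_norm_bounded B 0
    (fun T => ((hf.mono Icc_subset_Ici_self).integrableOn_Icc).mono_set Ioc_subset_Icc_self)
    tendsto_id ?_
  filter_upwards [eventually_ge_atTop 0] with T hT
  rw [id, intervalIntegral.integral_congr fun t ht => norm_of_nonneg (hf_nonneg t ?_)]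
  · exact hB T hT
  · rw [uIcc_of_le hT] at ht; exact ht.1

section SelfAdjoint

variable {H : Type*} [NormedAddCommGroup H] [InnerProductSpace ℝ H] {A : H →L[ℝ] H}

theorem inner_pow_add_apply (hA : ∀ x y : H, ⟪A x, y⟫ = ⟪x, A y⟫) (m n : ℕ) (x : H) :
    ⟪(A ^ (m + n)) x, x⟫ = ⟪(A ^ m) x, (A ^ n) x⟫ := by
  induction n generalizing m with
  | zero => simp
  | succ n ih =>
    rw [show m + (n + 1) = (m + 1) + n by omega, ih, pow_succ', pow_succ', mul_apply_eq_comp,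
      mul_apply_eq_comp, hA]

theorem inner_pow_apply_self_nonneg (hA : ∀ x y : H, ⟪A x, y⟫ = ⟪x, A y⟫)
    (hA_nonneg : ∀ x, 0 ≤ ⟪A x, x⟫) (n : ℕ) (x : H) : 0 ≤ ⟪(A ^ n) x, x⟫ := by
  obtain ⟨j, rfl | rfl⟩ := n.even_or_odd'
  · rw [two_mul, inner_pow_add_apply hA]
    exact real_inner_self_nonneg
  · rw [show 2 * j + 1 = (j + 1) + j by ring, inner_pow_add_apply hA, pow_succ', mul_apply_eq_comp]
    exact hA_nonneg _

theorem inner_apply_sq_le (hA : ∀ x y : H, ⟪A x, y⟫ = ⟪x, A y⟫)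
    (hA_nonneg : ∀ x, 0 ≤ ⟪A x, x⟫) (x y : H) :
    ⟪A x, y⟫ ^ 2 ≤ ⟪A x, x⟫ * ⟪A y, y⟫ := by
  have hquad : ∀ r : ℝ, 0 ≤ ⟪A y, y⟫ * (r * r) + 2 * ⟪A x, y⟫ * r + ⟪A x, x⟫ := by
    intro r
    have h := hA_nonneg (x + r • y)
    rw [map_add, map_smul, inner_add_left, inner_add_right, inner_add_right,
      real_inner_smul_left, real_inner_smul_left, real_inner_smul_right, real_inner_smul_right,
      hA y x, real_inner_comm (A x) y] at h
    linarith
  have := discrim_le_zero hquad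
  rw [discrim] at this
  linarith

theorem norm_apply_sq_le (hA : ∀ x y : H, ⟪A x, y⟫ = ⟪x, A y⟫)
    (hA_nonneg : ∀ x, 0 ≤ ⟪A x, x⟫) (x : H) : ‖A x‖ ^ 2 ≤ ‖A‖ * ⟪A x, x⟫ := by
  have hcs := inner_apply_sq_le hA hA_nonneg x (A x)
  have hAAx : ⟪A (A x), A x⟫ ≤ ‖A‖ * ‖A x‖ ^ 2 :=
    (real_inner_le_norm _ _).trans (by nlinarith [A.le_opNorm (A x), norm_nonneg (A x)])
  rw [real_inner_self_eq_norm_sq] at hcs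
  rcases (sq_nonneg ‖A x‖).eq_or_lt with h | h
  · rw [← h]; exact mul_nonneg (norm_nonneg A) (hA_nonneg x)
  · nlinarith [hA_nonneg x]

theorem hasDerivAt_inner_pow_apply_self (hA : ∀ x y : H, ⟪A x, y⟫ = ⟪x, A y⟫) {v : ℝ → H}
    {μ t : ℝ} (hv : HasDerivAt v (-μ • A (v t)) t) (n : ℕ) :
    HasDerivAt (fun s => ⟪(A ^ n) (v s), v s⟫) (-(2 * μ) * ⟪(A ^ (n + 1)) (v t), v t⟫) t := by
  have hAv := (A ^ n).hasFDerivAt.comp_hasDerivAt t hv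
  refine (hAv.inner ℝ hv).congr_deriv ?_
  have hpow : (A ^ n) (A (v t)) = (A ^ (n + 1)) (v t) := by rw [pow_succ, mul_apply_eq_comp]
  have hpow' : A ((A ^ n) (v t)) = (A ^ (n + 1)) (v t) := by rw [pow_succ', mul_apply_eq_comp]
  simp only [Function.comp_apply, map_smul, real_inner_smul_left, real_inner_smul_right, ← hA,
    hpow, hpow']
  ring

end SelfAdjoint

namespace Parabolic

variable {H : Type*} [NormedAddCommGroup H] [InnerProductSpace ℝ H] {A : H →L[ℝ] H}
  {p γ : ℝ} {u : ℝ → H}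

variable (A γ u) in
noncomputable def weightedMoment (e : ℝ) (k : ℕ) (t : ℝ) : ℝ :=
  (1 + t) ^ e * ⟪A (u t), u t⟫ ^ (k * γ) * ⟪(A ^ k) (u t), u t⟫

variable (A p γ u) in
noncomputable def energy (k : ℕ) : ℝ → ℝ :=
  weightedMoment A γ u (2 * k * p) k

variable (A p γ u) in
noncomputable def dissipation (k : ℕ) : ℝ → ℝ :=
  weightedMoment A γ u ((2 * k - 1) * p) k

theorem continuousOn_weightedMoment (hγ : 0 ≤ γ) (hu : ContinuousOn u (Ici 0)) (e : ℝ) (k : ℕ) :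
    ContinuousOn (weightedMoment A γ u e k) (Ici 0) := by
  have hAu := A.continuous.comp_continuousOn hu
  refine ((ContinuousOn.rpow_const (by fun_prop) fun t (ht : 0 ≤ t) => ?_).mul
    ((hAu.inner hu).rpow_const fun _ _ => Or.inr (by positivity))).mul
    (((A ^ k).continuous.comp_continuousOn hu).inner hu)
  left; linarith

theorem weightedMoment_nonneg (hA : ∀ x y : H, ⟪A x, y⟫ = ⟪x, A y⟫)
    (hA_nonneg : ∀ x, 0 ≤ ⟪A x, x⟫) (e : ℝ) (k : ℕ) {t : ℝ} (ht : 0 ≤ t) :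
    0 ≤ weightedMoment A γ u e k t :=
  mul_nonneg (mul_nonneg (by positivity) (rpow_nonneg (hA_nonneg _) _))
    (inner_pow_apply_self_nonneg hA hA_nonneg k _)

theorem exists_hasDerivAt_energy_le (hA : ∀ x y : H, ⟪A x, y⟫ = ⟪x, A y⟫)
    (hA_nonneg : ∀ x, 0 ≤ ⟪A x, x⟫) (hp0 : 0 ≤ p) (hp1 : p ≤ 1) (hγ : 1 ≤ γ)
    (hu : ∀ t, 0 < t → HasDerivAt u (-((1 + t) ^ p * ⟪A (u t), u t⟫ ^ γ) • A (u t)) t)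
    (k : ℕ) {t : ℝ} (ht : 0 < t) :
    ∃ e, HasDerivAt (energy A p γ u (k + 1)) e t ∧
      e ≤ 2 * ((k + 1) * p) * dissipation A p γ u (k + 1) t
        - 2 * dissipation A p γ u (k + 2) t := by
  set μ := (1 + t) ^ p * ⟪A (u t), u t⟫ ^ γ
  have ht1 : 0 < 1 + t := by linarith
  have ha : HasDerivAt (fun s => ⟪A (u s), u s⟫) (-(2 * μ) * ⟪(A ^ 2) (u t), u t⟫) t := by
    simpa only [pow_one] using hasDerivAt_inner_pow_apply_self hA (hu t ht) 1
  have hw := ((hasDerivAt_id t).const_add 1).rpow_const (p := 2 * (k + 1 : ℕ) * p)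
    (Or.inl ht1.ne')
  have hP := ha.rpow_const (p := (k + 1 : ℕ) * γ) (Or.inr (by push_cast; nlinarith))
  have hQ := hasDerivAt_inner_pow_apply_self hA (hu t ht) (k + 1)
  refine ⟨_, (hw.mul hP).mul hQ, ?_⟩
  simp only [dissipation, weightedMoment, Pi.mul_apply, id, Nat.cast_add, Nat.cast_one,
    Nat.cast_ofNat] at hw hP ⊢
  set a := ⟪A (u t), u t⟫
  set q := ⟪(A ^ (k + 1)) (u t), u t⟫
  set q' := ⟪(A ^ (k + 2)) (u t), u t⟫
  have ha0 : 0 ≤ a := hA_nonneg _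
  have hq := inner_pow_apply_self_nonneg hA hA_nonneg (k + 1) (u t)
  have hq2 := inner_pow_apply_self_nonneg hA hA_nonneg 2 (u t)
  have hμ : 0 ≤ μ := by positivity
  have hweight : (1 + t) ^ (2 * (k + 1) * p - 1) ≤ (1 + t) ^ ((2 * (k + 1) - 1) * p) :=
    rpow_le_rpow_of_exponent_le (by linarith) (by nlinarith)
  have hgrowth := mul_le_mul_of_nonneg_left hweight
    (mul_nonneg (by positivity : (0:ℝ) ≤ 2 * ((k + 1) * p))
      (mul_nonneg (rpow_nonneg ha0 ((k + 1) * γ)) hq))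
  have hdecay : 0 ≤ (1 + t) ^ (2 * (k + 1) * p) *
      (2 * μ * ⟪(A ^ 2) (u t), u t⟫ * ((k + 1) * γ) * a ^ ((k + 1) * γ - 1)) * q := by
    have := rpow_nonneg ha0 ((k + 1) * γ - 1)
    positivity
  have hflux : (1 + t) ^ (2 * (k + 1) * p) * a ^ ((k + 1) * γ) * μ
      = (1 + t) ^ ((2 * (k + 2) - 1) * p) * a ^ ((k + 2) * γ) := by
    rw [show (2 * ((k:ℝ) + 2) - 1) * p = 2 * (k + 1) * p + p by ring, rpow_add ht1,
      show ((k:ℝ) + 2) * γ = (k + 1) * γ + γ by ring,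
      rpow_add_of_nonneg ha0 (by positivity) (by positivity)]
    ring
  linear_combination hgrowth + hdecay - 2 * q' * hflux

theorem hasBoundedPrimitive_dissipation (hA : ∀ x y : H, ⟪A x, y⟫ = ⟪x, A y⟫)
    (hA_nonneg : ∀ x, 0 ≤ ⟪A x, x⟫) (hp0 : 0 ≤ p) (hp1 : p ≤ 1) (hγ : 1 ≤ γ)
    (hu_cont : ContinuousOn u (Ici 0))
    (hu : ∀ t, 0 < t → HasDerivAt u (-((1 + t) ^ p * ⟪A (u t), u t⟫ ^ γ) • A (u t)) t)
    (k : ℕ) : HasBoundedPrimitive (dissipation A p γ u (k + 1)) := by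
  have hD : ∀ k, ContinuousOn (dissipation A p γ u k) (Ici 0) := fun k =>
    continuousOn_weightedMoment (by linarith) hu_cont _ k
  induction k with
  | zero =>
    refine HasBoundedPrimitive.of_hasDerivAt_le le_rfl (g := 0)
      (((A ^ 0).continuous.comp_continuousOn hu_cont).inner hu_cont)
      (fun t _ => inner_pow_apply_self_nonneg hA hA_nonneg 0 (u t))
      (fun t ht => ⟨_, hasDerivAt_inner_pow_apply_self hA (hu t ht) 0, ?_⟩)
      (hD 1) continuousOn_const ⟨0, by simp⟩
    norm_num [dissipation, weightedMoment, mul_assoc]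
  | succ k ih =>
    exact HasBoundedPrimitive.of_hasDerivAt_le (by positivity)
      (continuousOn_weightedMoment (by linarith) hu_cont _ _)
      (fun t ht => weightedMoment_nonneg hA hA_nonneg _ _ ht)
      (fun t ht => exists_hasDerivAt_energy_le hA hA_nonneg hp0 hp1 hγ hu k ht)
      (hD _) (hD _) ih

theorem integrableOn_dissipation (hA : ∀ x y : H, ⟪A x, y⟫ = ⟪x, A y⟫)
    (hA_nonneg : ∀ x, 0 ≤ ⟪A x, x⟫) (hp0 : 0 ≤ p) (hp1 : p ≤ 1) (hγ : 1 ≤ γ)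
    (hu_cont : ContinuousOn u (Ici 0))
    (hu : ∀ t, 0 < t → HasDerivAt u (-((1 + t) ^ p * ⟪A (u t), u t⟫ ^ γ) • A (u t)) t)
    (k : ℕ) : IntegrableOn (dissipation A p γ u (k + 1)) (Ici 0) :=
  (hasBoundedPrimitive_dissipation hA hA_nonneg hp0 hp1 hγ hu_cont hu k).integrableOn_Ici
    (continuousOn_weightedMoment (by linarith) hu_cont _ _)
    (fun _ ht => weightedMoment_nonneg hA hA_nonneg _ _ ht)

theorem dissipation_two (hA : ∀ x y : H, ⟪A x, y⟫ = ⟪x, A y⟫) :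
    dissipation A p γ u 2
      = fun t => ⟪A (u t), u t⟫ ^ (2 * γ) * ‖A (u t)‖ ^ 2 * (1 + t) ^ (3 * p) := by
  ext t
  simp only [dissipation, weightedMoment, pow_apply_eq_iterate, Function.iterate_succ_apply',
    Function.iterate_zero_apply]
  rw [hA (A (u t)), real_inner_self_eq_norm_sq]
  push_cast
  ring_nf

theorem dissipation_three (hA : ∀ x y : H, ⟪A x, y⟫ = ⟪x, A y⟫) :
    dissipation A p γ u 3
      = fun t => ⟪A (u t), u t⟫ ^ (3 * γ) * ⟪A (A (u t)), A (u t)⟫ * (1 + t) ^ (5 * p) := by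
  ext t
  simp only [dissipation, weightedMoment, pow_apply_eq_iterate, Function.iterate_succ_apply',
    Function.iterate_zero_apply]
  rw [hA (A (A (u t)))]
  push_cast
  ring_nf

theorem dissipation_four (hA : ∀ x y : H, ⟪A x, y⟫ = ⟪x, A y⟫) :
    dissipation A p γ u 4
      = fun t => ⟪A (u t), u t⟫ ^ (4 * γ) * (1 + t) ^ (7 * p) * ‖A (A (u t))‖ ^ 2 := by
  ext t
  simp only [dissipation, weightedMoment, pow_apply_eq_iterate, Function.iterate_succ_apply',
    Function.iterate_zero_apply]
  rw [hA (A (A (A (u t)))), hA (A (A (u t))), real_inner_self_eq_norm_sq]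
  push_cast
  ring_nf

theorem integrableOn_rpow_mul_norm_sq_apply_apply (hA : ∀ x y : H, ⟪A x, y⟫ = ⟪x, A y⟫)
    (hA_nonneg : ∀ x, 0 ≤ ⟪A x, x⟫) (hγ : 0 ≤ γ) (hu_cont : ContinuousOn u (Ici 0))
    (h3 : IntegrableOn (dissipation A p γ u 3) (Ici 0)) :
    IntegrableOn (fun t => ⟪A (u t), u t⟫ ^ (3 * γ) * (1 + t) ^ (5 * p) * ‖A (A (u t))‖ ^ 2)
      (Ici 0) := by
  refine (h3.const_mul ‖A‖).mono' ?_ (ae_restrict_of_forall_mem measurableSet_Ici fun t ht => ?_)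
  · have hAu := A.continuous.comp_continuousOn hu_cont
    refine ContinuousOn.aestronglyMeasurable ?_ measurableSet_Ici
    exact (((hAu.inner hu_cont).rpow_const fun _ _ => Or.inr (by positivity)).mul
      (ContinuousOn.rpow_const (by fun_prop) fun t (ht : 0 ≤ t) => Or.inl (by linarith))).mul
      ((A.continuous.comp_continuousOn hAu).norm.pow 2)
  · have ht1 : 0 < 1 + t := by have : (0:ℝ) ≤ t := ht; linarith
    rw [dissipation_three hA, norm_of_nonneg (by have := hA_nonneg (u t); positivity)]
    calc _ ≤ ⟪A (u t), u t⟫ ^ (3 * γ) * (1 + t) ^ (5 * p) * (‖A‖ * ⟪A (A (u t)), A (u t)⟫) := by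
          gcongr
          · have := hA_nonneg (u t); positivity
          · exact norm_apply_sq_le hA hA_nonneg _
      _ = _ := by ring

end Parabolic

namespace IsParSolution

variable {H : Type*} [NormedAddCommGroup H] [InnerProductSpace ℝ H] {A : H →L[ℝ] H}
  {p γ : ℝ} {u₀ : H} {u u' : ℝ → H}

theorem continuousOn (hu : IsParSolution A p γ u₀ u u') : ContinuousOn u (Ici 0) :=
  fun t ht => (hu.2.1 t ht).continuousWithinAt

theorem hasDerivAt (hu : IsParSolution A p γ u₀ u u') {t : ℝ} (ht : 0 < t) :
    HasDerivAt u (-((1 + t) ^ p * ⟪A (u t), u t⟫ ^ γ) • A (u t)) t := by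
  rw [neg_smul, ← eq_neg_of_add_eq_zero_left (hu.2.2.2 t ht.le)]
  exact (hu.2.1 t ht.le).hasDerivAt (Ici_mem_nhds ht)

theorem norm_deriv_sq_mul (hA_nonneg : ∀ x, 0 ≤ ⟪A x, x⟫) (hu : IsParSolution A p γ u₀ u u')
    {t : ℝ} (ht : 0 ≤ t) :
    ‖u' t‖ ^ 2 * (1 + t) ^ p = ⟪A (u t), u t⟫ ^ (2 * γ) * ‖A (u t)‖ ^ 2 * (1 + t) ^ (3 * p) := by
  have ht1 : 0 < 1 + t := by linarith
  rw [eq_neg_of_add_eq_zero_left (hu.2.2.2 t ht), norm_neg, norm_smul,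
    norm_of_nonneg (by have := hA_nonneg (u t); positivity), mul_pow, mul_pow,
    ← rpow_natCast, ← rpow_natCast, ← rpow_mul ht1.le, ← rpow_mul (hA_nonneg _), Nat.cast_ofNat,
    show 3 * p = p * 2 + p by ring, rpow_add ht1, mul_comm γ]
  ring

end IsParSolution

theorem parabolic_integral_estimates_general
    {H : Type*} [NormedAddCommGroup H] [InnerProductSpace ℝ H]
    (A : H →L[ℝ] H)
    (hA_sa : ∀ x y : H, ⟪A x, y⟫ = ⟪x, A y⟫)
    (hA_nn : ∀ x : H, 0 ≤ ⟪A x, x⟫)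
    (p γ : ℝ) (hp0 : 0 ≤ p) (hp1 : p ≤ 1) (hγ : 1 ≤ γ)
    (u₀ : H)
    (u u' : ℝ → H) (hu : IsParSolution A p γ u₀ u u') :
    ∃ γ₅ > 0,
      IntegrableOn (fun t => ‖u' t‖ ^ 2 * (1+t) ^ p) (Set.Ici (0:ℝ)) ∧
      (∫ t in Set.Ici (0:ℝ), ‖u' t‖ ^ 2 * (1+t) ^ p)
        = ∫ t in Set.Ici (0:ℝ),
            ⟪A (u t), u t⟫ ^ (2*γ) * ‖A (u t)‖ ^ 2 * (1+t) ^ (3*p) ∧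
      (∫ t in Set.Ici (0:ℝ), ‖u' t‖ ^ 2 * (1+t) ^ p) ≤ γ₅ ∧
      IntegrableOn
        (fun t => ⟪A (u t), u t⟫ ^ (3*γ) * ⟪A (A (u t)), A (u t)⟫ * (1+t) ^ (5*p))
        (Set.Ici (0:ℝ)) ∧
      (∫ t in Set.Ici (0:ℝ),
          ⟪A (u t), u t⟫ ^ (3*γ) * ⟪A (A (u t)), A (u t)⟫ * (1+t) ^ (5*p)) ≤ γ₅ ∧
      IntegrableOn
        (fun t => (⟪A (u t), u t⟫ ^ (4*γ) * (1+t) ^ (7*p)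
            + ⟪A (u t), u t⟫ ^ (3*γ) * (1+t) ^ (5*p)) * ‖A (A (u t))‖ ^ 2)
        (Set.Ici (0:ℝ)) ∧
      (∫ t in Set.Ici (0:ℝ),
          (⟪A (u t), u t⟫ ^ (4*γ) * (1+t) ^ (7*p)
            + ⟪A (u t), u t⟫ ^ (3*γ) * (1+t) ^ (5*p)) * ‖A (A (u t))‖ ^ 2) ≤ γ₅ := by
  have hD := Parabolic.integrableOn_dissipation hA_sa hA_nn hp0 hp1 hγ hu.continuousOn
    (fun _ ht => hu.hasDerivAt ht)
  have hderiv : EqOn (fun t => ‖u' t‖ ^ 2 * (1+t) ^ p)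
      (fun t => ⟪A (u t), u t⟫ ^ (2*γ) * ‖A (u t)‖ ^ 2 * (1+t) ^ (3*p)) (Ici 0) :=
    fun _ ht => hu.norm_deriv_sq_mul hA_nn ht
  have h₁ := Parabolic.dissipation_two hA_sa ▸ hD 1
  have h₂ := Parabolic.dissipation_three hA_sa ▸ hD 2
  have h₃ : IntegrableOn (fun t => (⟪A (u t), u t⟫ ^ (4*γ) * (1+t) ^ (7*p)
      + ⟪A (u t), u t⟫ ^ (3*γ) * (1+t) ^ (5*p)) * ‖A (A (u t))‖ ^ 2) (Ici 0) := by
    simp only [add_mul]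
    exact (Parabolic.dissipation_four hA_sa ▸ hD 3).add
      (Parabolic.integrableOn_rpow_mul_norm_sq_apply_apply hA_sa hA_nn (by linarith)
        hu.continuousOn (hD 2))
  set I₁ := ∫ t in Set.Ici (0:ℝ), ‖u' t‖ ^ 2 * (1+t) ^ p
  set I₂ := ∫ t in Set.Ici (0:ℝ),
    ⟪A (u t), u t⟫ ^ (3*γ) * ⟪A (A (u t)), A (u t)⟫ * (1+t) ^ (5*p)
  set I₃ := ∫ t in Set.Ici (0:ℝ), (⟪A (u t), u t⟫ ^ (4*γ) * (1+t) ^ (7*p)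
      + ⟪A (u t), u t⟫ ^ (3*γ) * (1+t) ^ (5*p)) * ‖A (A (u t))‖ ^ 2
  refine ⟨|I₁| + |I₂| + |I₃| + 1, by positivity, h₁.congr_fun hderiv.symm measurableSet_Ici,
    setIntegral_congr_fun measurableSet_Ici hderiv, ?_, h₂, ?_, h₃, ?_⟩ <;>
  linarith [le_abs_self I₁, le_abs_self I₂, le_abs_self I₃, abs_nonneg I₁, abs_nonneg I₂,
    abs_nonneg I₃]

/-- Integral estimates (3.6)–(3.8) for the parabolic problem:
the integrals `∫₀^∞ |u'|²(1+t)^p dt = ∫₀^∞ ⟨Au,u⟩^{2γ}|Au|²(1+t)^{3p} dt`,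
`∫₀^∞ ⟨Au,u⟩^{3γ} ⟨A²u,Au⟩ (1+t)^{5p} dt` and
`∫₀^∞ [⟨Au,u⟩^{4γ}(1+t)^{7p} + ⟨Au,u⟩^{3γ}(1+t)^{5p}] |A²u|² dt` are all bounded
by a constant `γ₅`. -/
theorem parabolic_integral_estimates
    {H : Type*} [NormedAddCommGroup H] [InnerProductSpace ℝ H] [CompleteSpace H]
    (A : H →L[ℝ] H)
    (hA_sa : ∀ x y : H, ⟪A x, y⟫ = ⟪x, A y⟫)
    (hA_nn : ∀ x : H, 0 ≤ ⟪A x, x⟫)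
    (p γ : ℝ) (hp0 : 0 ≤ p) (hp1 : p ≤ 1) (hγ : 1 ≤ γ)
    (u₀ : H) (hmdg : 0 < ⟪A u₀, u₀⟫)
    (u u' : ℝ → H) (hu : IsParSolution A p γ u₀ u u') :
    ∃ γ₅ > 0,
      IntegrableOn (fun t => ‖u' t‖ ^ 2 * (1+t) ^ p) (Set.Ici (0:ℝ)) ∧
      (∫ t in Set.Ici (0:ℝ), ‖u' t‖ ^ 2 * (1+t) ^ p)
        = ∫ t in Set.Ici (0:ℝ),
            ⟪A (u t), u t⟫ ^ (2*γ) * ‖A (u t)‖ ^ 2 * (1+t) ^ (3*p) ∧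
      (∫ t in Set.Ici (0:ℝ), ‖u' t‖ ^ 2 * (1+t) ^ p) ≤ γ₅ ∧
      IntegrableOn
        (fun t => ⟪A (u t), u t⟫ ^ (3*γ) * ⟪A (A (u t)), A (u t)⟫ * (1+t) ^ (5*p))
        (Set.Ici (0:ℝ)) ∧
      (∫ t in Set.Ici (0:ℝ),
          ⟪A (u t), u t⟫ ^ (3*γ) * ⟪A (A (u t)), A (u t)⟫ * (1+t) ^ (5*p)) ≤ γ₅ ∧
      IntegrableOn
        (fun t => (⟪A (u t), u t⟫ ^ (4*γ) * (1+t) ^ (7*p)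
            + ⟪A (u t), u t⟫ ^ (3*γ) * (1+t) ^ (5*p)) * ‖A (A (u t))‖ ^ 2)
        (Set.Ici (0:ℝ)) ∧
      (∫ t in Set.Ici (0:ℝ),
          (⟪A (u t), u t⟫ ^ (4*γ) * (1+t) ^ (7*p)
            + ⟪A (u t), u t⟫ ^ (3*γ) * (1+t) ^ (5*p)) * ‖A (A (u t))‖ ^ 2) ≤ γ₅ :=
  parabolic_integral_estimates_general A hA_sa hA_nn p γ hp0 hp1 hγ u₀ u u' hu
end
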